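/- arXiv:1812.03783 — 5 statements merged into one kernel-verified Lean document; each statement's English description precedes it below -/
import Mathlib

section
/- Let Λ and Λ̄ be finite Borel measures on [0,1] with Λ({0}) = Λ̄({0}) = 0, let c, c̄, K ≥ 0, let x, y ∈ [0,1] and let n, m ≥ 1 be integers. Then ∫_{(0,1]} (((1−z)x+zy)^n y^m − x^n y^m) z^{−1} Λ(dz) + ∫_{(0,1]} (x^n ((1−z)y+zx)^m − x^n y^m) z^{−1} Λ̄(dz) + c(y−x)·n x^{n−1} y^m + c̄K(x−y)·m x^n y^{m−1} + (1/2) x(1−x) n(n−1) x^{n−2} y^m equals ∑_{k=2}^{n} C(n,k) (∫_{(0,1]} z^{k−1}(1−z)^{n−k} Λ(dz)) (x^{n−k} y^{m+k} − x^n y^m) + ∑_{l=2}^{m} C(m,l) (∫_{(0,1]} z^{l−1}(1−z)^{m−l} Λ̄(dz)) (x^{n+l} y^{m−l} − x^n y^m) + n (c + ∫_{(0,1]} (1−z)^{n−1} Λ(dz)) (x^{n−1} y^{m+1} − x^n y^m) + m (c̄K + ∫_{(0,1]} (1−z)^{m−1} Λ̄(dz)) (x^{n+1} y^{m−1} − x^n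 y^m) + C(n,2) (x^{n−1} y^m − x^n y^m), with all integrals finite (for n = 1 the term with factor n(n−1) is zero, so x^{n−2} never occurs with nonzero coefficient). -/
/-!
Writing `x ^ n = x ^ n * (z + (1 - z)) ^ n` and expanding binomially, the jump integrand
`((1 - z) x + z y) ^ n y ^ m - x ^ n y ^ m` becomes
`∑ₖ C(n,k) z^k (1-z)^(n-k) (x^(n-k) y^(m+k) - x^n y^m)`, whose `k = 0` term vanishes. After division by `z` it is a polynomial in `z`, so it is integrable
on `(0, 1]` against a finite measure and integrates term by term to the `k`-merger rates. The
`k = 1` terms join the spontaneous switching drift into the single-migration rates, and the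
Wright–Fisher term `x (1 - x) f''(x) / 2` on `x ^ n` is the pair-coalescence term `C(n,2)`.
-/

open MeasureTheory Set

theorem mix_pow_mul_pow_sub {R : Type*} [CommRing R] (a b z : R) (n m : ℕ) :
    ((1 - z) * a + z * b) ^ n * b ^ m - a ^ n * b ^ m
      = z * ∑ k ∈ Finset.Icc 1 n, (n.choose k : R) * (z ^ (k - 1) * (1 - z) ^ (n - k))
          * (a ^ (n - k) * b ^ (m + k) - a ^ n * b ^ m) := by
  have hexpand : ((1 - z) * a + z * b) ^ n * b ^ m - a ^ n * b ^ m
      = ∑ k ∈ Finset.range (n + 1), (n.choose k : R) * (z ^ k * (1 - z) ^ (n - k))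
          * (a ^ (n - k) * b ^ (m + k) - a ^ n * b ^ m) := by
    calc ((1 - z) * a + z * b) ^ n * b ^ m - a ^ n * b ^ m
        = (z * b + (1 - z) * a) ^ n * b ^ m - (z + (1 - z)) ^ n * a ^ n * b ^ m := by ring
      _ = _ := by
        rw [add_pow, add_pow, Finset.sum_mul, Finset.sum_mul, Finset.sum_mul,
          ← Finset.sum_sub_distrib]
        exact Finset.sum_congr rfl fun k _ => by simp only [mul_pow]; ring
  rw [hexpand, Finset.range_eq_Ico, Finset.sum_eq_sum_Ico_succ_bot (by omega : 0 < n + 1),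
    zero_add, Finset.Ico_add_one_right_eq_Icc, Finset.mul_sum]
  simp only [Nat.sub_zero, add_zero, sub_self, mul_zero, zero_add]
  refine Finset.sum_congr rfl fun k hk => ?_
  rw [← pow_sub_one_mul (Nat.one_le_iff_ne_zero.1 (Finset.mem_Icc.1 hk).1) z]
  ring

theorem integrableOn_Ioc_pow_mul_one_sub_pow (μ : Measure ℝ) [IsLocallyFiniteMeasure μ]
    (i j : ℕ) : IntegrableOn (fun z : ℝ => z ^ i * (1 - z) ^ j) (Ioc 0 1) μ :=
  (Continuous.integrableOn_Icc (by fun_prop)).mono_set Ioc_subset_Icc_self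

section Jump

variable (μ : Measure ℝ) [IsLocallyFiniteMeasure μ] (x y : ℝ) (n m : ℕ)

theorem integrableOn_and_setIntegral_mix_pow_sub_div :
    IntegrableOn (fun z : ℝ => (((1 - z) * x + z * y) ^ n * y ^ m - x ^ n * y ^ m) / z)
      (Ioc 0 1) μ ∧
    ∫ z in Ioc (0:ℝ) 1, (((1 - z) * x + z * y) ^ n * y ^ m - x ^ n * y ^ m) / z ∂μ
      = ∑ k ∈ Finset.Icc 1 n, (n.choose k : ℝ)
          * (∫ z in Ioc (0:ℝ) 1, z ^ (k - 1) * (1 - z) ^ (n - k) ∂μ)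
          * (x ^ (n - k) * y ^ (m + k) - x ^ n * y ^ m) := by
  have hpoly : EqOn (fun z : ℝ => (((1 - z) * x + z * y) ^ n * y ^ m - x ^ n * y ^ m) / z)
      (fun z => ∑ k ∈ Finset.Icc 1 n, (n.choose k : ℝ) * (z ^ (k - 1) * (1 - z) ^ (n - k))
        * (x ^ (n - k) * y ^ (m + k) - x ^ n * y ^ m)) (Ioc 0 1) := fun z hz => by
    dsimp only
    rw [mix_pow_mul_pow_sub, mul_div_cancel_left₀ _ hz.1.ne']
  have hterm (k : ℕ) : IntegrableOn (fun z : ℝ => (n.choose k : ℝ)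
      * (z ^ (k - 1) * (1 - z) ^ (n - k)) * (x ^ (n - k) * y ^ (m + k) - x ^ n * y ^ m))
      (Ioc 0 1) μ :=
    ((integrableOn_Ioc_pow_mul_one_sub_pow μ _ _).const_mul _).mul_const _
  refine ⟨IntegrableOn.congr_fun (integrable_finsetSum _ fun k _ => hterm k) hpoly.symm
    measurableSet_Ioc, ?_⟩
  rw [setIntegral_congr_fun measurableSet_Ioc hpoly, integral_finsetSum _ fun k _ => hterm k]
  simp only [integral_mul_const, integral_const_mul]

theorem integrableOn_and_setIntegral_pow_mul_mix_pow_sub_div :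
    IntegrableOn (fun z : ℝ => (x ^ n * ((1 - z) * y + z * x) ^ m - x ^ n * y ^ m) / z)
      (Ioc 0 1) μ ∧
    ∫ z in Ioc (0:ℝ) 1, (x ^ n * ((1 - z) * y + z * x) ^ m - x ^ n * y ^ m) / z ∂μ
      = ∑ l ∈ Finset.Icc 1 m, (m.choose l : ℝ)
          * (∫ z in Ioc (0:ℝ) 1, z ^ (l - 1) * (1 - z) ^ (m - l) ∂μ)
          * (x ^ (n + l) * y ^ (m - l) - x ^ n * y ^ m) := by
  simp only [mul_comm (x ^ n), mul_comm (x ^ (n + _))]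
  exact integrableOn_and_setIntegral_mix_pow_sub_div μ y x m n

end Jump

theorem half_mul_one_sub_mul_pow_sub_two_eq_choose_two {K : Type*} [Field K] [NeZero (2 : K)]
    (x : K) (n : ℕ) :
    1 / 2 * x * (1 - x) * n * ((n : K) - 1) * x ^ (n - 2)
      = n.choose 2 * (x ^ (n - 1) - x ^ n) := by
  rcases n with _ | _ | n
  · simp
  · simp
  · rw [Nat.cast_choose_two]
    field_simp
    simp only [Nat.add_sub_cancel]
    push_cast
    ring

theorem stmt1_general (Λ Λbar : Measure ℝ) [IsFiniteMeasure Λ] [IsFiniteMeasure Λbar]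
    (c cbar K : ℝ)
    (x y : ℝ)
    (n m : ℕ) (hn : 1 ≤ n) (hm : 1 ≤ m) :
    IntegrableOn
      (fun z : ℝ => (((1 - z) * x + z * y) ^ n * y ^ m - x ^ n * y ^ m) / z)
      (Set.Ioc 0 1) Λ ∧
    IntegrableOn
      (fun z : ℝ => (x ^ n * ((1 - z) * y + z * x) ^ m - x ^ n * y ^ m) / z)
      (Set.Ioc 0 1) Λbar ∧
    (∫ z in Set.Ioc (0:ℝ) 1, (((1 - z) * x + z * y) ^ n * y ^ m - x ^ n * y ^ m) / z ∂Λ)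
      + (∫ z in Set.Ioc (0:ℝ) 1, (x ^ n * ((1 - z) * y + z * x) ^ m - x ^ n * y ^ m) / z ∂Λbar)
      + c * (y - x) * n * x ^ (n - 1) * y ^ m
      + cbar * K * (x - y) * m * x ^ n * y ^ (m - 1)
      + (1 / 2) * x * (1 - x) * n * ((n : ℝ) - 1) * x ^ (n - 2) * y ^ m
    = (∑ k ∈ Finset.Icc 2 n, (n.choose k : ℝ)
          * (∫ z in Set.Ioc (0:ℝ) 1, z ^ (k - 1) * (1 - z) ^ (n - k) ∂Λ)
          * (x ^ (n - k) * y ^ (m + k) - x ^ n * y ^ m))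
      + (∑ l ∈ Finset.Icc 2 m, (m.choose l : ℝ)
          * (∫ z in Set.Ioc (0:ℝ) 1, z ^ (l - 1) * (1 - z) ^ (m - l) ∂Λbar)
          * (x ^ (n + l) * y ^ (m - l) - x ^ n * y ^ m))
      + (n : ℝ) * (c + ∫ z in Set.Ioc (0:ℝ) 1, (1 - z) ^ (n - 1) ∂Λ)
          * (x ^ (n - 1) * y ^ (m + 1) - x ^ n * y ^ m)
      + (m : ℝ) * (cbar * K + ∫ z in Set.Ioc (0:ℝ) 1, (1 - z) ^ (m - 1) ∂Λbar)
          * (x ^ (n + 1) * y ^ (m - 1) - x ^ n * y ^ m)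
      + (n.choose 2 : ℝ) * (x ^ (n - 1) * y ^ m - x ^ n * y ^ m) := by
  obtain ⟨hintΛ, hΛ⟩ := integrableOn_and_setIntegral_mix_pow_sub_div Λ x y n m
  obtain ⟨hintΛbar, hΛbar⟩ := integrableOn_and_setIntegral_pow_mul_mix_pow_sub_div Λbar x y n m
  refine ⟨hintΛ, hintΛbar, ?_⟩
  rw [hΛ, hΛbar, ← Finset.add_sum_Ioc_eq_sum_Icc hn, ← Finset.add_sum_Ioc_eq_sum_Icc hm,
    ← Finset.Icc_add_one_left_eq_Ioc, ← Finset.Icc_add_one_left_eq_Ioc,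
    half_mul_one_sub_mul_pow_sub_two_eq_choose_two]
  obtain ⟨n, rfl⟩ := Nat.exists_eq_add_of_le' hn
  obtain ⟨m, rfl⟩ := Nat.exists_eq_add_of_le' hm
  simp only [Nat.sub_self, Nat.add_sub_cancel, pow_zero, one_mul, Nat.choose_one_right]
  push_cast
  ring

/-- Generator duality identity: the generator of the seed bank diffusion with jumps applied
to `f(x,y) = x^n y^m` equals the generator of the block-counting process of the seed bank
coalescent with simultaneous switching applied to `(n,m) ↦ x^n y^m`. -/
theorem stmt1 (Λ Λbar : Measure ℝ) [IsFiniteMeasure Λ] [IsFiniteMeasure Λbar]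
    (hΛsupp : Λ (Set.Icc (0:ℝ) 1)ᶜ = 0) (hΛ0 : Λ {0} = 0)
    (hΛbsupp : Λbar (Set.Icc (0:ℝ) 1)ᶜ = 0) (hΛb0 : Λbar {0} = 0)
    (c cbar K : ℝ) (hc : 0 ≤ c) (hcbar : 0 ≤ cbar) (hK : 0 ≤ K)
    (x y : ℝ) (hx : x ∈ Set.Icc (0:ℝ) 1) (hy : y ∈ Set.Icc (0:ℝ) 1)
    (n m : ℕ) (hn : 1 ≤ n) (hm : 1 ≤ m) :
    IntegrableOn
      (fun z : ℝ => (((1 - z) * x + z * y) ^ n * y ^ m - x ^ n * y ^ m) / z)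
      (Set.Ioc 0 1) Λ ∧
    IntegrableOn
      (fun z : ℝ => (x ^ n * ((1 - z) * y + z * x) ^ m - x ^ n * y ^ m) / z)
      (Set.Ioc 0 1) Λbar ∧
    (∫ z in Set.Ioc (0:ℝ) 1, (((1 - z) * x + z * y) ^ n * y ^ m - x ^ n * y ^ m) / z ∂Λ)
      + (∫ z in Set.Ioc (0:ℝ) 1, (x ^ n * ((1 - z) * y + z * x) ^ m - x ^ n * y ^ m) / z ∂Λbar)
      + c * (y - x) * n * x ^ (n - 1) * y ^ m
      + cbar * K * (x - y) * m * x ^ n * y ^ (m - 1)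
      + (1 / 2) * x * (1 - x) * n * ((n : ℝ) - 1) * x ^ (n - 2) * y ^ m
    = (∑ k ∈ Finset.Icc 2 n, (n.choose k : ℝ)
          * (∫ z in Set.Ioc (0:ℝ) 1, z ^ (k - 1) * (1 - z) ^ (n - k) ∂Λ)
          * (x ^ (n - k) * y ^ (m + k) - x ^ n * y ^ m))
      + (∑ l ∈ Finset.Icc 2 m, (m.choose l : ℝ)
          * (∫ z in Set.Ioc (0:ℝ) 1, z ^ (l - 1) * (1 - z) ^ (m - l) ∂Λbar)
          * (x ^ (n + l) * y ^ (m - l) - x ^ n * y ^ m))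
      + (n : ℝ) * (c + ∫ z in Set.Ioc (0:ℝ) 1, (1 - z) ^ (n - 1) ∂Λ)
          * (x ^ (n - 1) * y ^ (m + 1) - x ^ n * y ^ m)
      + (m : ℝ) * (cbar * K + ∫ z in Set.Ioc (0:ℝ) 1, (1 - z) ^ (m - 1) ∂Λbar)
          * (x ^ (n + 1) * y ^ (m - 1) - x ^ n * y ^ m)
      + (n.choose 2 : ℝ) * (x ^ (n - 1) * y ^ m - x ^ n * y ^ m) :=
  stmt1_general Λ Λbar c cbar K x y n m hn hm
end

section
/- Let p ∈ [0,1] and let ρ be a Borel probability measure on [0,1]² such that ∫_{[0,1]²} x^n y^m ρ(d(x,y)) = p for every pair of nonnegative integers (n,m) with n + m ≥ 1. Then ρ = p·δ_{(1,1)} + (1−p)·δ_{(0,0)}, where δ_{(a,b)} denotes the Dirac measure at (a,b). -/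
/-!
On the unit square `x² ≤ x`, `xy ≤ x` and `xy ≤ y`, while all these monomials have integral
`p`; so each inequality is an equality `ρ`-almost everywhere. Then almost surely `x = xy = y`
and `x ∈ {0, 1}`, i.e. `ρ` lives on `{(0,0), (1,1)}`, and the weights of the two atoms are read
off from the total mass and the first moment.
-/

open MeasureTheory Set

namespace MeasureTheory

variable {α : Type*} [MeasurableSpace α] [MeasurableSingletonClass α] {μ : Measure α} {a b : α}

lemma Measure.eq_smul_dirac_add_smul_dirac_of_ae (hab : a ≠ b) (h : ∀ᵐ x ∂μ, x = a ∨ x = b) :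
    μ = μ {a} • Measure.dirac a + μ {b} • Measure.dirac b := by
  have hmem : ∀ᵐ x ∂μ, x ∈ ({a} ∪ {b} : Set α) := h
  calc μ = μ.restrict ({a} ∪ {b}) := (Measure.restrict_eq_self_of_ae_mem hmem).symm
    _ = μ {a} • Measure.dirac a + μ {b} • Measure.dirac b := by
      rw [Measure.restrict_union (disjoint_singleton.2 hab) (measurableSet_singleton b),
        Measure.restrict_singleton, Measure.restrict_singleton]

lemma integral_eq_of_ae_eq_or_eq [IsFiniteMeasure μ] (hab : a ≠ b)
    (h : ∀ᵐ x ∂μ, x = a ∨ x = b) (f : α → ℝ) :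
    ∫ x, f x ∂μ = μ.real {a} * f a + μ.real {b} * f b := by
  conv_lhs => rw [Measure.eq_smul_dirac_add_smul_dirac_of_ae hab h]
  rw [integral_add_measure, integral_smul_measure, integral_smul_measure, integral_dirac,
    integral_dirac]
  · rfl
  all_goals
    exact (integrable_dirac enorm_lt_top).smul_measure (measure_ne_top μ _)

end MeasureTheory

section UnitSquare

variable {ρ : Measure (ℝ × ℝ)}

lemma integrable_monomial_of_ae_mem_unitSquare [IsFiniteMeasure ρ]
    (hbox : ∀ᵐ q ∂ρ, q.1 ∈ Icc (0:ℝ) 1 ∧ q.2 ∈ Icc (0:ℝ) 1) (n m : ℕ) :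
    Integrable (fun q : ℝ × ℝ => q.1 ^ n * q.2 ^ m) ρ := by
  refine Integrable.of_bound (by fun_prop) 1 ?_
  filter_upwards [hbox] with q ⟨⟨hx₀, hx₁⟩, ⟨hy₀, hy₁⟩⟩
  rw [Real.norm_eq_abs, abs_of_nonneg (by positivity)]
  exact mul_le_one₀ (pow_le_one₀ hx₀ hx₁) (by positivity) (pow_le_one₀ hy₀ hy₁)

lemma monomial_ae_eq_of_ae_le [IsFiniteMeasure ρ] {p : ℝ}
    (hbox : ∀ᵐ q ∂ρ, q.1 ∈ Icc (0:ℝ) 1 ∧ q.2 ∈ Icc (0:ℝ) 1)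
    (hmom : ∀ n m : ℕ, 1 ≤ n + m → ∫ q : ℝ × ℝ, q.1 ^ n * q.2 ^ m ∂ρ = p)
    {n₁ m₁ n₂ m₂ : ℕ} (h₁ : 1 ≤ n₁ + m₁) (h₂ : 1 ≤ n₂ + m₂)
    (hle : ∀ x y : ℝ, x ∈ Icc (0:ℝ) 1 → y ∈ Icc (0:ℝ) 1 → x ^ n₁ * y ^ m₁ ≤ x ^ n₂ * y ^ m₂) :
    ∀ᵐ q ∂ρ, q.1 ^ n₁ * q.2 ^ m₁ = q.1 ^ n₂ * q.2 ^ m₂ := by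
  refine (integral_eq_iff_of_ae_le (integrable_monomial_of_ae_mem_unitSquare hbox _ _)
    (integrable_monomial_of_ae_mem_unitSquare hbox _ _) ?_).1 ?_
  · filter_upwards [hbox] with q hq using hle _ _ hq.1 hq.2
  · rw [hmom _ _ h₁, hmom _ _ h₂]

lemma ae_eq_one_one_or_eq_zero_zero [IsFiniteMeasure ρ] {p : ℝ}
    (hbox : ∀ᵐ q ∂ρ, q.1 ∈ Icc (0:ℝ) 1 ∧ q.2 ∈ Icc (0:ℝ) 1)
    (hmom : ∀ n m : ℕ, 1 ≤ n + m → ∫ q : ℝ × ℝ, q.1 ^ n * q.2 ^ m ∂ρ = p) :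
    ∀ᵐ q ∂ρ, q = (1, 1) ∨ q = (0, 0) := by
  have hxx := monomial_ae_eq_of_ae_le hbox hmom (n₁ := 2) (m₁ := 0) (n₂ := 1) (m₂ := 0)
    (by norm_num) (by norm_num) fun x _ hx _ => by nlinarith [hx.1, hx.2]
  have hxy := monomial_ae_eq_of_ae_le hbox hmom (n₁ := 1) (m₁ := 1) (n₂ := 1) (m₂ := 0)
    (by norm_num) (by norm_num) fun x y hx hy => by nlinarith [hx.1, hy.2]
  have hyx := monomial_ae_eq_of_ae_le hbox hmom (n₁ := 1) (m₁ := 1) (n₂ := 0) (m₂ := 1)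
    (by norm_num) (by norm_num) fun x y hx hy => by nlinarith [hx.2, hy.1]
  filter_upwards [hxx, hxy, hyx] with ⟨x, y⟩ hxx hxy hyx
  simp only [pow_zero, pow_one, mul_one, one_mul] at hxx hxy hyx
  have hxy : x = y := hxy.symm.trans hyx
  subst hxy
  rcases eq_zero_or_one_of_sq_eq_self hxx with rfl | rfl <;> simp

end UnitSquare
theorem stmt2_general (p : ℝ)
    (ρ : Measure (ℝ × ℝ)) [IsProbabilityMeasure ρ]
    (hsupp : ρ {q : ℝ × ℝ | ¬ (q.1 ∈ Set.Icc (0:ℝ) 1 ∧ q.2 ∈ Set.Icc (0:ℝ) 1)} = 0)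
    (hmom : ∀ n m : ℕ, 1 ≤ n + m → ∫ q : ℝ × ℝ, q.1 ^ n * q.2 ^ m ∂ρ = p) :
    ρ = ENNReal.ofReal p • Measure.dirac ((1:ℝ), (1:ℝ))
        + ENNReal.ofReal (1 - p) • Measure.dirac ((0:ℝ), (0:ℝ)) := by
  have hatoms := ae_eq_one_one_or_eq_zero_zero (ae_iff.2 hsupp) hmom
  have hne : ((1:ℝ), (1:ℝ)) ≠ (0, 0) := by simp
  have hmass := integral_eq_of_ae_eq_or_eq hne hatoms fun _ => 1
  have hfirst := integral_eq_of_ae_eq_or_eq hne hatoms Prod.fst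
  have h1 := hmom 1 0 le_rfl
  simp only [pow_one, pow_zero, mul_one, mul_zero, add_zero] at hmass hfirst h1
  rw [integral_const, probReal_univ, smul_eq_mul, mul_one] at hmass
  rw [h1] at hfirst
  rw [Measure.eq_smul_dirac_add_smul_dirac_of_ae hne hatoms, ← ofReal_measureReal,
    ← ofReal_measureReal, ← hfirst]
  congr 3
  linarith

/-- If all mixed moments (of order `n + m ≥ 1`) of a Borel probability measure `ρ` on `[0,1]²`
equal the same value `p`, then `ρ = p δ_{(1,1)} + (1-p) δ_{(0,0)}`. -/
theorem stmt2 (p : ℝ) (hp : p ∈ Set.Icc (0:ℝ) 1)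
    (ρ : Measure (ℝ × ℝ)) [IsProbabilityMeasure ρ]
    (hsupp : ρ {q : ℝ × ℝ | ¬ (q.1 ∈ Set.Icc (0:ℝ) 1 ∧ q.2 ∈ Set.Icc (0:ℝ) 1)} = 0)
    (hmom : ∀ n m : ℕ, 1 ≤ n + m → ∫ q : ℝ × ℝ, q.1 ^ n * q.2 ^ m ∂ρ = p) :
    ρ = ENNReal.ofReal p • Measure.dirac ((1:ℝ), (1:ℝ))
        + ENNReal.ofReal (1 - p) • Measure.dirac ((0:ℝ), (0:ℝ)) :=
  stmt2_general p ρ hsupp hmom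
end

section
/- Let Λ be a finite Borel measure on [0,1] with Λ({0}) = 0, and for integers n ≥ 2 set γ(n) := ∫_{(0,1]} (1 − (1−z)^n) z^{−1} Λ(dz). Then for every n ≥ 2, | γ(n)/(C(n,2) + γ(n)) − γ(n)/C(n,2) | ≤ 4 Λ([0,1])² / (n−1)², where C(n,2) = n(n−1)/2. -/
/-!
For `γ ≥ 0` the difference is `-γ² / (C (C + γ))`, of size at most `(γ / C)²`. Bernoulli's
inequality bounds the integrand `(1 - (1 - z)ⁿ) / z` by `n`, so `γ ≤ n Λ([0,1])` and
`γ / C(n,2) ≤ 2 Λ([0,1]) / (n - 1)`.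
-/

open MeasureTheory Set

lemma abs_div_add_sub_div_le_sq {γ C : ℝ} (hγ : 0 ≤ γ) (hC : 0 < C) :
    |γ / (C + γ) - γ / C| ≤ (γ / C) ^ 2 := by
  have hCγ : 0 < C + γ := by linarith
  have hdiff : γ / (C + γ) - γ / C = -(γ ^ 2 / (C * (C + γ))) := by
    field_simp
    ring
  rw [hdiff, abs_neg, abs_of_nonneg (by positivity), div_pow, sq C]
  exact div_le_div_of_nonneg_left (sq_nonneg γ) (by positivity) (by nlinarith)

section Integrand

variable {z : ℝ} (n : ℕ)

lemma one_sub_pow_le_one (hz₀ : 0 ≤ z) (hz₂ : z ≤ 2) : (1 - z) ^ n ≤ 1 :=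
  (le_abs_self _).trans <| by
    rw [abs_pow]
    exact pow_le_one₀ (abs_nonneg _) (abs_le.2 ⟨by linarith, by linarith⟩)

lemma one_sub_one_sub_pow_div_nonneg (hz₀ : 0 ≤ z) (hz₂ : z ≤ 2) :
    0 ≤ (1 - (1 - z) ^ n) / z :=
  div_nonneg (sub_nonneg.2 (one_sub_pow_le_one n hz₀ hz₂)) hz₀

lemma one_sub_one_sub_pow_div_le (hz₀ : 0 < z) (hz₂ : z ≤ 2) :
    (1 - (1 - z) ^ n) / z ≤ n := by
  have bernoulli := one_add_mul_le_pow (show (-2 : ℝ) ≤ -z by linarith) n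
  rw [← sub_eq_add_neg] at bernoulli
  rw [div_le_iff₀ hz₀]
  linarith

end Integrand

section Integral

variable (Λ : Measure ℝ) (n : ℕ)

lemma setIntegral_one_sub_one_sub_pow_div_nonneg :
    0 ≤ ∫ z in Ioc (0 : ℝ) 1, (1 - (1 - z) ^ n) / z ∂Λ :=
  setIntegral_nonneg measurableSet_Ioc fun _ hz ↦
    one_sub_one_sub_pow_div_nonneg n hz.1.le (by linarith [hz.2])

lemma setIntegral_one_sub_one_sub_pow_div_le [IsFiniteMeasure Λ] :
    ∫ z in Ioc (0 : ℝ) 1, (1 - (1 - z) ^ n) / z ∂Λ ≤ n * Λ.real (Icc 0 1) := by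
  calc ∫ z in Ioc (0 : ℝ) 1, (1 - (1 - z) ^ n) / z ∂Λ
      ≤ n * Λ.real (Ioc 0 1) := by
        refine (Real.le_norm_self _).trans <| norm_setIntegral_le_of_norm_le_const
          (measure_lt_top Λ _) fun z hz ↦ ?_
        rw [Real.norm_eq_abs, abs_of_nonneg
          (one_sub_one_sub_pow_div_nonneg n hz.1.le (by linarith [hz.2]))]
        exact one_sub_one_sub_pow_div_le n hz.1 (by linarith [hz.2])
    _ ≤ n * Λ.real (Icc 0 1) := by gcongr; exacts [measure_ne_top Λ _, Ioc_subset_Icc_self]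

end Integral

theorem stmt4_general (Λ : Measure ℝ) [IsFiniteMeasure Λ]
    (n : ℕ) (hn : 2 ≤ n)
    (γ : ℝ) (hγ : γ = ∫ z in Set.Ioc (0:ℝ) 1, (1 - (1 - z) ^ n) / z ∂Λ) :
    |γ / ((n.choose 2 : ℝ) + γ) - γ / (n.choose 2 : ℝ)|
      ≤ 4 * (Λ (Set.Icc (0:ℝ) 1)).toReal ^ 2 / ((n : ℝ) - 1) ^ 2 := by
  set L := Λ.real (Icc (0 : ℝ) 1)
  have hn₁ : (1 : ℝ) ≤ n - 1 := by
    have : (2 : ℝ) ≤ n := by exact_mod_cast hn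
    linarith
  have hchoose : (n.choose 2 : ℝ) = n * (n - 1) / 2 := Nat.cast_choose_two ℝ n
  have hγ₀ : 0 ≤ γ := hγ ▸ setIntegral_one_sub_one_sub_pow_div_nonneg Λ n
  have hγC : γ / (n.choose 2 : ℝ) ≤ 2 * L / (n - 1) := by
    rw [hchoose, div_le_div_iff₀ (by positivity) (by positivity)]
    have hγ_le := hγ ▸ setIntegral_one_sub_one_sub_pow_div_le Λ n
    nlinarith
  calc |γ / ((n.choose 2 : ℝ) + γ) - γ / (n.choose 2 : ℝ)|
      ≤ (γ / (n.choose 2 : ℝ)) ^ 2 :=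
        abs_div_add_sub_div_le_sq hγ₀ (by rw [hchoose]; positivity)
    _ ≤ (2 * L / (n - 1)) ^ 2 := by gcongr
    _ = 4 * L ^ 2 / ((n : ℝ) - 1) ^ 2 := by rw [div_pow, mul_pow]; norm_num

/-- The probability that a migration precedes the next coalescence,
`γ(n)/(C(n,2)+γ(n))`, equals `γ(n)/C(n,2)` up to an error of `4Λ([0,1])²/(n−1)²`. -/
theorem stmt4 (Λ : Measure ℝ) [IsFiniteMeasure Λ]
    (hΛsupp : Λ (Set.Icc (0:ℝ) 1)ᶜ = 0) (hΛ0 : Λ {0} = 0)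
    (n : ℕ) (hn : 2 ≤ n)
    (γ : ℝ) (hγ : γ = ∫ z in Set.Ioc (0:ℝ) 1, (1 - (1 - z) ^ n) / z ∂Λ) :
    |γ / ((n.choose 2 : ℝ) + γ) - γ / (n.choose 2 : ℝ)|
      ≤ 4 * (Λ (Set.Icc (0:ℝ) 1)).toReal ^ 2 / ((n : ℝ) - 1) ^ 2 :=
  stmt4_general Λ n hn γ hγ
end

section
/- For every integer n ≥ 1 there is a constant C, depending only on n, with the following property: for every real N ≥ 1 and all independent integrable random variables T and U taking values in [0, N] almost surely and satisfying Var(T) ≤ N and Var(U) ≤ N, one has | E[(T+U)^n] − (E[T] + E[U])^n | ≤ C · N^{n−1}. -/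
/-!
Write `S = T + U` and `μ = E[S]`. Since `s ↦ sⁿ` has second derivative at most
`n (n - 1) Mⁿ⁻²` on `[-M, M]`, the first-order Taylor remainder of `Sⁿ` around `μ` is at most
`C(n, 2) Mⁿ⁻² (S - μ)²`, while the first-order term has mean zero. Hence
`|E[Sⁿ] - μⁿ| ≤ C(n, 2) Mⁿ⁻² Var(S)`. With `M = 2N` and, by independence,
`Var(S) = Var(T) + Var(U) ≤ 2N`, this is `C(n, 2) 2ⁿ⁻¹ Nⁿ⁻¹`.
-/

open MeasureTheory ProbabilityTheory Finset

theorem abs_pow_sub_pow_sub_mul_le {a b M : ℝ} (ha : |a| ≤ M) (hb : |b| ≤ M) (n : ℕ) :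
    |a ^ n - b ^ n - n * b ^ (n - 1) * (a - b)| ≤ n.choose 2 * M ^ (n - 2) * (a - b) ^ 2 := by
  have hM : 0 ≤ M := (abs_nonneg a).trans ha
  have hab : max |a| |b| ≤ M := max_le ha hb
  have hexpand : a ^ n - b ^ n - n * b ^ (n - 1) * (a - b)
      = (a - b) * ∑ i ∈ range n, (a ^ i - b ^ i) * b ^ (n - 1 - i) := by
    have hconst : (n : ℝ) * b ^ (n - 1) = ∑ i ∈ range n, b ^ i * b ^ (n - 1 - i) := by
      rw [sum_congr rfl fun i hi => by rw [← pow_add, Nat.add_sub_cancel' (by grind)],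
        sum_const, card_range, nsmul_eq_mul]
    rw [← geom_sum₂_mul, hconst, ← sub_mul, ← sum_sub_distrib, mul_comm (a - b)]
    exact congrArg (· * (a - b)) (sum_congr rfl fun i _ => by ring)
  have hterm : ∀ i ∈ range n,
      |(a ^ i - b ^ i) * b ^ (n - 1 - i)| ≤ |a - b| * (i * M ^ (n - 2)) := by
    intro i hi
    rcases i with _ | i
    · simp
    calc |(a ^ (i + 1) - b ^ (i + 1)) * b ^ (n - 1 - (i + 1))|
        ≤ |a - b| * (i + 1 : ℕ) * M ^ i * M ^ (n - 1 - (i + 1)) := by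
          rw [abs_mul, abs_pow]
          gcongr
          exact (abs_pow_sub_pow_le ..).trans (by rw [Nat.add_sub_cancel]; gcongr)
      _ = |a - b| * ((i + 1 : ℕ) * M ^ (n - 2)) := by
          rw [mul_assoc _ (M ^ i), ← pow_add, mul_assoc]
          congr 3
          grind
  have hgauss : ∑ i ∈ range n, (i : ℝ) = n.choose 2 := by
    rw [← Nat.cast_sum, sum_range_id, Nat.choose_two_right]
  rw [hexpand, abs_mul]
  calc |a - b| * |∑ i ∈ range n, (a ^ i - b ^ i) * b ^ (n - 1 - i)|
      ≤ |a - b| * ∑ i ∈ range n, |a - b| * (i * M ^ (n - 2)) := by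
        gcongr
        exact (abs_sum_le_sum_abs _ _).trans (sum_le_sum hterm)
    _ = n.choose 2 * M ^ (n - 2) * (a - b) ^ 2 := by
        rw [← mul_sum, ← sum_mul, hgauss, ← sq_abs (a - b)]
        ring

theorem abs_integral_pow_sub_integral_pow_le {Ω : Type*} {mΩ : MeasurableSpace Ω}
    {P : Measure Ω} [IsProbabilityMeasure P] {X : Ω → ℝ} {M : ℝ} (hX : AEMeasurable X P)
    (hXM : ∀ᵐ ω ∂P, |X ω| ≤ M) (n : ℕ) :
    |∫ ω, X ω ^ n ∂P - (∫ ω, X ω ∂P) ^ n| ≤ n.choose 2 * M ^ (n - 2) * Var[X; P] := by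
  set μ := ∫ ω, X ω ∂P
  have hXM' : ∀ᵐ ω ∂P, ‖X ω‖ ≤ M := hXM
  have hXint : Integrable X P := .of_bound hX.aestronglyMeasurable M hXM'
  have hXnint : Integrable (fun ω => X ω ^ n) P :=
    .of_bound (hX.pow_const n).aestronglyMeasurable (M ^ n) <| hXM.mono fun ω h => by
      rw [Real.norm_eq_abs, abs_pow]
      exact pow_le_pow_left₀ (abs_nonneg _) h n
  have hsqint : Integrable (fun ω => (X ω - μ) ^ 2) P :=
    ((MemLp.of_bound hX.aestronglyMeasurable M hXM').sub (memLp_const μ)).integrable_sq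
  have hlinint : Integrable (fun ω => n * μ ^ (n - 1) * (X ω - μ)) P :=
    (hXint.sub (integrable_const μ)).const_mul _
  have hμM : |μ| ≤ M := by
    simpa using norm_integral_le_of_norm_le_const (μ := P) hXM'
  have hcentered : ∫ ω, X ω - μ ∂P = 0 := by
    rw [integral_sub hXint (integrable_const μ)]
    simp [μ]
  have hremainder : ∫ ω, X ω ^ n ∂P - μ ^ n
      = ∫ ω, X ω ^ n - μ ^ n - n * μ ^ (n - 1) * (X ω - μ) ∂P := by
    have hdiff : Integrable (fun ω => X ω ^ n - μ ^ n) P := hXnint.sub (integrable_const _)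
    rw [integral_sub hdiff hlinint, integral_sub hXnint (integrable_const _), integral_const_mul,
      hcentered]
    simp
  rw [hremainder, variance_eq_integral hX, ← integral_const_mul, ← Real.norm_eq_abs]
  refine norm_integral_le_of_norm_le (hsqint.const_mul _) (hXM.mono fun ω h => ?_)
  exact abs_pow_sub_pow_sub_mul_le h hμM n

theorem stmt10_general (n : ℕ) :
    ∃ C : ℝ, ∀ (Ω : Type) (_ : MeasurableSpace Ω) (P : Measure Ω),
      IsProbabilityMeasure P →
      ∀ (T U : Ω → ℝ), IndepFun T U P → Integrable T P → Integrable U P →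
      ∀ N : ℝ, 1 ≤ N →
      (∀ᵐ ω ∂P, T ω ∈ Set.Icc (0:ℝ) N) → (∀ᵐ ω ∂P, U ω ∈ Set.Icc (0:ℝ) N) →
      variance T P ≤ N → variance U P ≤ N →
      |(∫ ω, (T ω + U ω) ^ n ∂P) - ((∫ ω, T ω ∂P) + ∫ ω, U ω ∂P) ^ n|
        ≤ C * N ^ (n - 1) := by
  refine ⟨n.choose 2 * 2 ^ (n - 1), ?_⟩
  intro Ω _ P _ T U hTU hTi hUi N hN hTb hUb hTv hUv
  have hT2 : MemLp T 2 P := .of_bound hTi.aestronglyMeasurable N <|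
    hTb.mono fun ω h => (abs_of_nonneg h.1).trans_le h.2
  have hU2 : MemLp U 2 P := .of_bound hUi.aestronglyMeasurable N <|
    hUb.mono fun ω h => (abs_of_nonneg h.1).trans_le h.2
  have hbound : ∀ᵐ ω ∂P, |(T + U) ω| ≤ 2 * N := by
    filter_upwards [hTb, hUb] with ω hT hU
    rw [Pi.add_apply, abs_of_nonneg (add_nonneg hT.1 hU.1)]
    linarith [hT.2, hU.2]
  have hvar : Var[T + U; P] ≤ 2 * N := by
    rw [hTU.variance_add hT2 hU2]
    linarith
  have hpow : (n.choose 2 : ℝ) * (2 * N) ^ (n - 2) * (2 * N)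
      = n.choose 2 * 2 ^ (n - 1) * N ^ (n - 1) := by
    rcases lt_or_ge n 2 with hn | hn
    · simp [Nat.choose_eq_zero_of_lt hn]
    · rw [mul_assoc, ← pow_succ, show n - 2 + 1 = n - 1 by omega, mul_pow, mul_assoc]
  rw [← integral_add hTi hUi]
  calc _ ≤ n.choose 2 * (2 * N) ^ (n - 2) * Var[T + U; P] :=
        abs_integral_pow_sub_integral_pow_le (hTi.add hUi).aemeasurable hbound n
    _ ≤ n.choose 2 * (2 * N) ^ (n - 2) * (2 * N) := by gcongr
    _ = n.choose 2 * 2 ^ (n - 1) * N ^ (n - 1) := hpow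

/-- Moment estimate: for every `n ≥ 1` there is a constant `C = C(n)` such that for all
`N ≥ 1` and all independent integrable random variables `T, U` with values in `[0,N]` a.s.
and variances at most `N`, `|E[(T+U)^n] − (E[T]+E[U])^n| ≤ C N^{n−1}`. -/
theorem stmt10 (n : ℕ) (hn : 1 ≤ n) :
    ∃ C : ℝ, ∀ (Ω : Type) (_ : MeasurableSpace Ω) (P : Measure Ω),
      IsProbabilityMeasure P →
      ∀ (T U : Ω → ℝ), IndepFun T U P → Integrable T P → Integrable U P →
      ∀ N : ℝ, 1 ≤ N →
      (∀ᵐ ω ∂P, T ω ∈ Set.Icc (0:ℝ) N) → (∀ᵐ ω ∂P, U ω ∈ Set.Icc (0:ℝ) N) →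
      variance T P ≤ N → variance U P ≤ N →
      |(∫ ω, (T ω + U ω) ^ n ∂P) - ((∫ ω, T ω ∂P) + ∫ ω, U ω ∂P) ^ n|
        ≤ C * N ^ (n - 1) :=
  stmt10_general n
end

section
/- Let Λ be a finite Borel measure on [0,1] with Λ({0}) = 0 and total mass Λ([0,1]) > 0, and let Y be a random variable with law Λ([0,1])^{−1} Λ and U an independent uniform random variable on [0,1]. Then for every integer n ≥ 1, ∫_{(0,1]} (1 − (1−z)^n) z^{−1} Λ(dz) = n · Λ([0,1]) · E[(1 − UY)^{n−1}]. -/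
open MeasureTheory Set ProbabilityTheory

/-! Differentiating `u ↦ (1 - u z)^n` gives `1 - (1 - z)^n = n z ∫₀¹ (1 - u z)^(n-1) du`, so on
`(0, 1]` the integrand `(1 - (1 - z)^n) / z` is `n E[(1 - U z)^(n-1)]`. Since `Λ` is carried by
`(0, 1]`, integrating in `z` against `Λ = Λ([0,1]) · law(Y)` and using the independence of `U`
and `Y` (Fubini on the joint law) gives the formula. -/

lemma mul_mul_intervalIntegral_one_sub_mul_pow (n : ℕ) (z : ℝ) :
    n * z * ∫ u in (0:ℝ)..1, (1 - u * z) ^ (n - 1) = 1 - (1 - z) ^ n := by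
  have hderiv : ∀ u ∈ uIcc (0:ℝ) 1,
      HasDerivAt (fun u : ℝ => (1 - u * z) ^ n) (n * (1 - u * z) ^ (n - 1) * -z) u :=
    fun u _ => by simpa using (((hasDerivAt_id u).mul_const z).const_sub 1).fun_pow n
  have hftc := intervalIntegral.integral_eq_sub_of_hasDerivAt hderiv
    ((by fun_prop : Continuous fun u : ℝ => n * (1 - u * z) ^ (n - 1) * -z).intervalIntegrable 0 1)
  rw [intervalIntegral.integral_mul_const, intervalIntegral.integral_const_mul] at hftc
  simp only [one_mul, zero_mul, sub_zero, one_pow] at hftc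
  linarith

lemma div_eq_mul_intervalIntegral_one_sub_mul_pow (n : ℕ) {z : ℝ} (hz : z ≠ 0) :
    (1 - (1 - z) ^ n) / z = n * ∫ u in (0:ℝ)..1, (1 - u * z) ^ (n - 1) := by
  rw [div_eq_iff hz, ← mul_mul_intervalIntegral_one_sub_mul_pow]
  ring

lemma integrable_one_sub_mul_pow {μ ν : Measure ℝ} [IsFiniteMeasure μ] [IsFiniteMeasure ν]
    (hμ : μ (Icc 0 1)ᶜ = 0) (hν : ν (Icc 0 1)ᶜ = 0) (k : ℕ) :
    Integrable (fun p : ℝ × ℝ => (1 - p.1 * p.2) ^ k) (μ.prod ν) := by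
  refine (integrable_const (1:ℝ)).mono' (by fun_prop) ?_
  filter_upwards [mem_ae_iff.2 (Measure.measure_prod_compl_eq_zero hμ hν)]
    with ⟨u, y⟩ ⟨⟨hu0, hu1⟩, hy0, hy1⟩
  have h0 : 0 ≤ 1 - u * y := by nlinarith
  rw [Real.norm_eq_abs, abs_pow, abs_of_nonneg h0]
  exact pow_le_one₀ h0 (by nlinarith)

lemma toReal_measure_univ_smul_integral_inv_smul {α E : Type*} [MeasurableSpace α]
    [NormedAddCommGroup E] [NormedSpace ℝ E] (μ : Measure α) [IsFiniteMeasure μ] (f : α → E) :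
    (μ univ).toReal • ∫ x, f x ∂((μ univ)⁻¹ • μ) = ∫ x, f x ∂μ := by
  rcases eq_zero_or_neZero μ with rfl | hμ
  · simp
  rw [integral_smul_measure, smul_smul, ENNReal.toReal_inv,
    mul_inv_cancel₀ (by simp [ENNReal.toReal_eq_zero_iff, NeZero.ne μ]), one_smul]

theorem ProbabilityTheory.IndepFun.integral_comp_eq_integral_integral {Ω α β E : Type*}
    [MeasurableSpace Ω] [MeasurableSpace α] [MeasurableSpace β] [NormedAddCommGroup E]
    [NormedSpace ℝ E] [CompleteSpace E] {P : Measure Ω} [IsFiniteMeasure P] {X : Ω → α}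
    {Y : Ω → β} (hXY : IndepFun X Y P) (hX : AEMeasurable X P) (hY : AEMeasurable Y P)
    {f : α × β → E} (hf : Integrable f ((P.map X).prod (P.map Y))) :
    ∫ ω, f (X ω, Y ω) ∂P = ∫ y, ∫ x, f (x, y) ∂(P.map X) ∂(P.map Y) := by
  have hjoint := hXY.map_prod_eq_prod_map_map hX hY
  rw [← integral_prod_symm f hf, ← hjoint]
  rw [← hjoint] at hf
  exact (integral_map (hX.prodMk hY) hf.aestronglyMeasurable).symm

theorem stmt15_general (Λ : Measure ℝ) [IsFiniteMeasure Λ]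
    (hΛsupp : Λ (Set.Icc (0:ℝ) 1)ᶜ = 0) (hΛ0 : Λ {0} = 0)
    {Ω : Type*} [MeasurableSpace Ω] (P : Measure Ω) [IsProbabilityMeasure P]
    (U Y : Ω → ℝ) (hU : Measurable U) (hY : Measurable Y)
    (hUunif : Measure.map U P = volume.restrict (Set.Icc (0:ℝ) 1))
    (hYlaw : Measure.map Y P = (Λ Set.univ)⁻¹ • Λ)
    (hindep : IndepFun U Y P)
    (n : ℕ) :
    (∫ z in Set.Ioc (0:ℝ) 1, (1 - (1 - z) ^ n) / z ∂Λ)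
      = n * (Λ (Set.Icc (0:ℝ) 1)).toReal * ∫ ω, (1 - U ω * Y ω) ^ (n - 1) ∂P := by
  have hΛIoc : Ioc (0:ℝ) 1 ∈ ae Λ := mem_ae_iff.2 <| by
    rw [← Icc_sdiff_left, compl_sdiff]
    exact measure_union_null hΛ0 hΛsupp
  have hΛuniv : Λ (Icc 0 1) = Λ univ := measure_congr (ae_eq_univ.2 hΛsupp)
  have hE : ∫ ω, (1 - U ω * Y ω) ^ (n - 1) ∂P
      = ∫ y, (∫ u in (0:ℝ)..1, (1 - u * y) ^ (n - 1)) ∂((Λ univ)⁻¹ • Λ) := by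
    rw [hindep.integral_comp_eq_integral_integral hU.aemeasurable hY.aemeasurable
      (integrable_one_sub_mul_pow (by simp [hUunif]) (by simp [hYlaw, hΛsupp]) _), hYlaw, hUunif]
    simp only [integral_Icc_eq_integral_Ioc, intervalIntegral.integral_of_le zero_le_one]
  calc (∫ z in Ioc (0:ℝ) 1, (1 - (1 - z) ^ n) / z ∂Λ)
      = ∫ z, n * (∫ u in (0:ℝ)..1, (1 - u * z) ^ (n - 1)) ∂Λ := by
        rw [Measure.restrict_eq_self_of_ae_mem (s := Ioc 0 1) hΛIoc]
        apply integral_congr_ae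
        filter_upwards [hΛIoc] with z hz
        exact div_eq_mul_intervalIntegral_one_sub_mul_pow n hz.1.ne'
    _ = _ := by
      rw [integral_const_mul, ← toReal_measure_univ_smul_integral_inv_smul Λ, hE, hΛuniv,
        smul_eq_mul, mul_assoc]

/-- Griffiths-type representation: with `Y` distributed as `Λ([0,1])^{−1}Λ` and `U` an
independent uniform on `[0,1]`, for every `n ≥ 1`,
`∫_{(0,1]} (1−(1−z)^n) z^{−1} Λ(dz) = n Λ([0,1]) E[(1−UY)^{n−1}]`. -/
theorem stmt15 (Λ : Measure ℝ) [IsFiniteMeasure Λ]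
    (hΛsupp : Λ (Set.Icc (0:ℝ) 1)ᶜ = 0) (hΛ0 : Λ {0} = 0)
    (hΛpos : 0 < (Λ (Set.Icc (0:ℝ) 1)).toReal)
    {Ω : Type*} [MeasurableSpace Ω] (P : Measure Ω) [IsProbabilityMeasure P]
    (U Y : Ω → ℝ) (hU : Measurable U) (hY : Measurable Y)
    (hUunif : Measure.map U P = volume.restrict (Set.Icc (0:ℝ) 1))
    (hYlaw : Measure.map Y P = (Λ Set.univ)⁻¹ • Λ)
    (hindep : IndepFun U Y P)
    (n : ℕ) (hn : 1 ≤ n) :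
    (∫ z in Set.Ioc (0:ℝ) 1, (1 - (1 - z) ^ n) / z ∂Λ)
      = n * (Λ (Set.Icc (0:ℝ) 1)).toReal * ∫ ω, (1 - U ω * Y ω) ^ (n - 1) ∂P :=
  stmt15_general Λ hΛsupp hΛ0 P U Y hU hY hUunif hYlaw hindep n
end
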